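/- arXiv:1612.09054 — 4 statements merged into one kernel-verified Lean document; each statement's English description precedes it below -/
import Mathlib

section
/- For all positive integers n, the convolution sum W(1,1;n) = Σ_{a+b=n, a,b≥1} σ(a)σ(b) equals (5/12)σ₃(n) + ((1−6n)/12)σ(n), where σ(m)=Σ_{d|m}d and σ₃(m)=Σ_{d|m}d³. -/
open Finset PowerSeries Real Complex

/-- σ_k(n) = sum of k-th powers of the positive divisors of n. -/
def sig (k n : ℕ) : ℕ := ∑ d ∈ n.divisors, d ^ k

/-- σ_k(n/d) ∈ ℚ with the convention that it is 0 when d ∤ n. -/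
def sigQ (k n d : ℕ) : ℚ := if d ∣ n then (sig k (n / d) : ℚ) else 0

/-- W(r,s;n) = Σ_{a,b ≥ 1, ar+bs=n} σ(a)σ(b). -/
def W (r s n : ℕ) : ℕ :=
  ∑ p ∈ (Finset.Icc 1 n ×ˢ Finset.Icc 1 n).filter (fun p => r * p.1 + s * p.2 = n),
    sig 1 p.1 * sig 1 p.2

/-!
Since `σ(a) σ(b)` is the sum of `d * e` over `d * u = a`, `e * v = b`, the sum `W(1,1;n)` is the
sum of `d * e` over the positive solutions of `d u + e v = n`. Transposing `(d, u) ↦ (u, d)` and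
`(e, v) ↦ (v, e)` permutes these solutions, so `d * e` may be replaced by the weight
`(d e + u v) / 2 + u² - d²`. The solutions with `d < e` are the chains `(x₁, x₂, x₃, x₄)` with
`x₁ x₂ + x₂ x₃ + x₃ x₄ = n`, via `(d, u, e, v) = (x₂, x₁, x₂ + x₄, x₃)`, and those with `d > e`
are their mirror images `(e, v, d, u)`. Together they carry the weight
`(x₁² + x₁ x₃ + x₃²) - (x₄² + x₄ x₂ + x₂²)`, which is odd under reversing the chain, so only
the diagonal `d (u + v) = n` contributes, and there the weight sums to a polynomial in `d` and
`n / d`.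
-/

lemma sum_comp_of_involutive {ι M : Type*} [AddCommMonoid M] {s : Finset ι} {σ : ι → ι}
    (hσ : Function.Involutive σ) (hs : ∀ x ∈ s, σ x ∈ s) (f : ι → M) :
    ∑ x ∈ s, f (σ x) = ∑ x ∈ s, f x :=
  sum_nbij' σ σ hs hs (fun x _ => hσ x) (fun x _ => hσ x) (fun _ _ => rfl)

def divisorQuadruples (n : ℕ) : Finset ((ℕ × ℕ) × ℕ × ℕ) :=
  ((Icc 1 n ×ˢ Icc 1 n) ×ˢ Icc 1 n ×ˢ Icc 1 n).filter
    fun q => q.1.1 * q.1.2 + q.2.1 * q.2.2 = n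

lemma mem_divisorQuadruples {n d u e v : ℕ} :
    ((d, u), (e, v)) ∈ divisorQuadruples n ↔
      (0 < d ∧ 0 < u ∧ 0 < e ∧ 0 < v) ∧ d * u + e * v = n := by
  simp only [divisorQuadruples, mem_filter, mem_product, mem_Icc]
  constructor
  · rintro ⟨⟨⟨⟨hd, -⟩, hu, -⟩, ⟨he, -⟩, hv, -⟩, h⟩
    exact ⟨⟨hd, hu, he, hv⟩, h⟩
  · rintro ⟨⟨hd, hu, he, hv⟩, rfl⟩
    have := Nat.le_mul_of_pos_right d hu
    have := Nat.le_mul_of_pos_left u hd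
    have := Nat.le_mul_of_pos_right e hv
    have := Nat.le_mul_of_pos_left v he
    refine ⟨⟨⟨⟨hd, ?_⟩, hu, ?_⟩, ⟨he, ?_⟩, hv, ?_⟩, rfl⟩ <;> omega

def chainQuadruples (n : ℕ) : Finset (ℕ × ℕ × ℕ × ℕ) :=
  (Icc 1 n ×ˢ Icc 1 n ×ˢ Icc 1 n ×ˢ Icc 1 n).filter
    fun x => x.1 * x.2.1 + x.2.1 * x.2.2.1 + x.2.2.1 * x.2.2.2 = n

lemma mem_chainQuadruples {n a b c d : ℕ} :
    (a, b, c, d) ∈ chainQuadruples n ↔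
      (0 < a ∧ 0 < b ∧ 0 < c ∧ 0 < d) ∧ a * b + b * c + c * d = n := by
  simp only [chainQuadruples, mem_filter, mem_product, mem_Icc]
  constructor
  · rintro ⟨⟨⟨ha, -⟩, ⟨hb, -⟩, ⟨hc, -⟩, hd, -⟩, h⟩
    exact ⟨⟨ha, hb, hc, hd⟩, h⟩
  · rintro ⟨⟨ha, hb, hc, hd⟩, rfl⟩
    have := Nat.le_mul_of_pos_right a hb
    have := Nat.le_mul_of_pos_left b ha
    have := Nat.le_mul_of_pos_right c hd
    have := Nat.le_mul_of_pos_left d hc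
    refine ⟨⟨⟨ha, ?_⟩, ⟨hb, ?_⟩, ⟨hc, ?_⟩, hd, ?_⟩, rfl⟩ <;> omega

lemma sum_chainQuadruples_comp_reverse {M : Type*} [AddCommMonoid M] (n : ℕ)
    (f : ℕ × ℕ × ℕ × ℕ → M) :
    ∑ x ∈ chainQuadruples n, f (x.2.2.2, x.2.2.1, x.2.1, x.1) =
      ∑ x ∈ chainQuadruples n, f x := by
  refine sum_comp_of_involutive (fun _ => rfl) ?_ f
  rintro ⟨a, b, c, d⟩ hx
  rw [mem_chainQuadruples] at hx ⊢
  obtain ⟨⟨ha, hb, hc, hd⟩, h⟩ := hx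
  exact ⟨⟨hd, hc, hb, ha⟩, by rw [← h]; ring⟩

lemma sum_divisorQuadruples_comp_transpose {M : Type*} [AddCommMonoid M] (n : ℕ)
    (f : (ℕ × ℕ) × ℕ × ℕ → M) :
    ∑ q ∈ divisorQuadruples n, f (q.1.swap, q.2.swap) = ∑ q ∈ divisorQuadruples n, f q := by
  refine sum_comp_of_involutive (fun _ => rfl) ?_ f
  rintro ⟨⟨d, u⟩, e, v⟩ hq
  rw [mem_divisorQuadruples] at hq
  rw [Prod.swap_prod_mk, Prod.swap_prod_mk, mem_divisorQuadruples]
  exact ⟨by omega, by rw [← hq.2]; ring⟩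

lemma sum_divisorQuadruples_comp_swap {M : Type*} [AddCommMonoid M] (n : ℕ)
    (f : (ℕ × ℕ) × ℕ × ℕ → M) :
    ∑ q ∈ divisorQuadruples n, f q.swap = ∑ q ∈ divisorQuadruples n, f q := by
  refine sum_comp_of_involutive Prod.swap_swap ?_ f
  rintro ⟨⟨d, u⟩, e, v⟩ hq
  rw [mem_divisorQuadruples] at hq
  rw [Prod.swap_prod_mk, mem_divisorQuadruples]
  exact ⟨by omega, by rw [← hq.2]; ring⟩

lemma sum_filter_lt_divisorQuadruples {M : Type*} [AddCommMonoid M] (n : ℕ)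
    (f : (ℕ × ℕ) × ℕ × ℕ → M) :
    ∑ q ∈ divisorQuadruples n with q.1.1 < q.2.1, f q =
      ∑ x ∈ chainQuadruples n, f ((x.2.1, x.1), (x.2.1 + x.2.2.2, x.2.2.1)) := by
  symm
  refine sum_nbij' (fun x => ((x.2.1, x.1), (x.2.1 + x.2.2.2, x.2.2.1)))
    (fun q => (q.1.2, q.1.1, q.2.2, q.2.1 - q.1.1)) ?_ ?_ ?_ ?_ (fun _ _ => rfl)
  · rintro ⟨a, b, c, d⟩ hx
    rw [mem_chainQuadruples] at hx
    obtain ⟨⟨ha, hb, hc, hd⟩, h⟩ := hx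
    dsimp only
    rw [mem_filter, mem_divisorQuadruples]
    exact ⟨⟨⟨hb, ha, by omega, hc⟩, by rw [← h]; ring⟩, show b < b + d by omega⟩
  · rintro ⟨⟨d, u⟩, e, v⟩ hq
    rw [mem_filter, mem_divisorQuadruples] at hq
    obtain ⟨⟨⟨hd, hu, -, hv⟩, h⟩, hde : d < e⟩ := hq
    obtain ⟨k, rfl⟩ := Nat.exists_eq_add_of_lt hde
    rw [mem_chainQuadruples, show d + k + 1 - d = k + 1 by omega]
    exact ⟨⟨hu, hd, hv, by omega⟩, by rw [← h]; ring⟩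
  · rintro ⟨a, b, c, d⟩ -
    simp
  · rintro ⟨⟨d, u⟩, e, v⟩ hq
    have hde : d < e := (mem_filter.mp hq).2
    simp only [Prod.mk.injEq, true_and, and_true]
    omega

lemma sum_filter_eq_divisorQuadruples {M : Type*} [AddCommMonoid M] (n : ℕ)
    (f : (ℕ × ℕ) × ℕ × ℕ → M) :
    ∑ q ∈ divisorQuadruples n with q.1.1 = q.2.1, f q =
      ∑ p ∈ n.divisorsAntidiagonal, ∑ u ∈ Ico 1 p.2, f ((p.1, u), (p.1, p.2 - u)) := by
  rw [sum_sigma']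
  symm
  refine sum_nbij' (fun z => ((z.1.1, z.2), (z.1.1, z.1.2 - z.2)))
    (fun q => ⟨(q.1.1, q.1.2 + q.2.2), q.1.2⟩) ?_ ?_ ?_ ?_ (fun _ _ => rfl)
  · rintro ⟨⟨d, N⟩, u⟩ hz
    simp only [mem_sigma, Nat.mem_divisorsAntidiagonal, mem_Ico] at hz
    obtain ⟨⟨h, hn⟩, hu, huN⟩ := hz
    have hd : 0 < d := Nat.pos_of_ne_zero (by rintro rfl; simp_all)
    dsimp only
    rw [mem_filter, mem_divisorQuadruples]
    refine ⟨⟨⟨hd, hu, hd, by omega⟩, ?_⟩, rfl⟩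
    rw [← mul_add, Nat.add_sub_cancel' huN.le, h]
  · rintro ⟨⟨d, u⟩, e, v⟩ hq
    rw [mem_filter, mem_divisorQuadruples] at hq
    obtain ⟨⟨⟨hd, hu, -, hv⟩, h⟩, rfl : d = e⟩ := hq
    simp only [mem_sigma, Nat.mem_divisorsAntidiagonal, mem_Ico]
    exact ⟨⟨by rw [← h]; ring, by rw [← h]; positivity⟩, hu, by omega⟩
  · rintro ⟨⟨d, N⟩, u⟩ hz
    have huN : u < N := (mem_Ico.mp (mem_sigma.mp hz).2).2
    simp only [Sigma.mk.injEq, Prod.mk.injEq, heq_eq_eq, true_and, and_true]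
    omega
  · rintro ⟨⟨d, u⟩, e, v⟩ hq
    obtain rfl : d = e := (mem_filter.mp hq).2
    simp

lemma sum_divisorQuadruples_eq {M : Type*} [AddCommMonoid M] (n : ℕ)
    (f : (ℕ × ℕ) × ℕ × ℕ → M) :
    ∑ q ∈ divisorQuadruples n, f q =
      ∑ x ∈ chainQuadruples n, (f ((x.2.1, x.1), (x.2.1 + x.2.2.2, x.2.2.1)) +
        f ((x.2.1 + x.2.2.2, x.2.2.1), (x.2.1, x.1))) +
      ∑ p ∈ n.divisorsAntidiagonal, ∑ u ∈ Ico 1 p.2, f ((p.1, u), (p.1, p.2 - u)) := by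
  have hgt : ∑ q ∈ divisorQuadruples n with q.2.1 < q.1.1, f q =
      ∑ q ∈ divisorQuadruples n with q.1.1 < q.2.1, f q.swap := by
    rw [sum_filter, sum_filter, ← sum_divisorQuadruples_comp_swap n]
    rfl
  have htrichotomy : ∑ q ∈ divisorQuadruples n, f q =
      ∑ q ∈ divisorQuadruples n with q.1.1 < q.2.1, f q +
      ∑ q ∈ divisorQuadruples n with q.2.1 < q.1.1, f q +
      ∑ q ∈ divisorQuadruples n with q.1.1 = q.2.1, f q := by
    simp only [sum_filter, ← sum_add_distrib]
    refine sum_congr rfl fun q _ => ?_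
    rcases lt_trichotomy q.1.1 q.2.1 with h | h | h
    · simp [h, h.ne, h.not_gt]
    · simp [h]
    · simp [h, h.ne', h.not_gt]
  rw [htrichotomy, hgt, sum_filter_lt_divisorQuadruples, sum_filter_lt_divisorQuadruples,
    sum_filter_eq_divisorQuadruples, sum_add_distrib]
  rfl

lemma sig_one_eq_sum_divisorsAntidiagonal (a : ℕ) :
    sig 1 a = ∑ x ∈ a.divisorsAntidiagonal, x.1 := by
  rw [Nat.sum_divisorsAntidiagonal fun i _ => i, sig]
  simp only [pow_one]

lemma filter_divisorQuadruples_eq_product {n a b : ℕ} (hab : a + b = n) :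
    {q ∈ divisorQuadruples n | (q.1.1 * q.1.2, q.2.1 * q.2.2) = (a, b)} =
      a.divisorsAntidiagonal ×ˢ b.divisorsAntidiagonal := by
  ext ⟨⟨d, u⟩, e, v⟩
  simp only [mem_filter, mem_divisorQuadruples, mem_product, Nat.mem_divisorsAntidiagonal,
    Prod.mk.injEq]
  constructor
  · rintro ⟨⟨⟨hd, hu, he, hv⟩, -⟩, rfl, rfl⟩
    exact ⟨⟨rfl, by positivity⟩, rfl, by positivity⟩
  · rintro ⟨⟨rfl, ha⟩, rfl, hb⟩
    simp only [mul_ne_zero_iff] at ha hb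
    exact ⟨⟨⟨by omega, by omega, by omega, by omega⟩, hab⟩, rfl, rfl⟩

lemma W_one_one_eq_sum_divisorQuadruples (n : ℕ) :
    W 1 1 n = ∑ q ∈ divisorQuadruples n, q.1.1 * q.2.1 := by
  have hmaps : ∀ q ∈ divisorQuadruples n, (q.1.1 * q.1.2, q.2.1 * q.2.2) ∈
      (Icc 1 n ×ˢ Icc 1 n).filter (fun p => 1 * p.1 + 1 * p.2 = n) := by
    rintro ⟨⟨d, u⟩, e, v⟩ hq
    rw [mem_divisorQuadruples] at hq
    obtain ⟨⟨hd, hu, he, hv⟩, h⟩ := hq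
    have := Nat.mul_pos hd hu
    have := Nat.mul_pos he hv
    simp only [mem_filter, mem_product, mem_Icc]
    omega
  rw [W, ← sum_fiberwise_of_maps_to hmaps]
  refine sum_congr rfl fun p hp => ?_
  rw [filter_divisorQuadruples_eq_product (by simpa using (mem_filter.mp hp).2), sum_product,
    sig_one_eq_sum_divisorsAntidiagonal, sig_one_eq_sum_divisorsAntidiagonal, sum_mul_sum]

def quadWeight (q : (ℕ × ℕ) × ℕ × ℕ) : ℚ :=
  (q.1.1 * q.2.1 + q.1.2 * q.2.2 : ℚ) / 2 + (q.1.2 : ℚ) ^ 2 - (q.1.1 : ℚ) ^ 2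

lemma sum_quadWeight_eq (n : ℕ) :
    ∑ q ∈ divisorQuadruples n, quadWeight q =
      ∑ q ∈ divisorQuadruples n, (q.1.1 * q.2.1 : ℚ) := by
  have huv := sum_divisorQuadruples_comp_transpose n fun q => (q.1.1 * q.2.1 : ℚ)
  have hu := sum_divisorQuadruples_comp_transpose n fun q => (q.1.1 : ℚ) ^ 2
  simp only [Prod.fst_swap] at huv hu
  simp only [quadWeight, sum_sub_distrib, sum_add_distrib, ← sum_div]
  rw [huv, hu]
  ring

lemma sum_chainQuadruples_quadWeight (n : ℕ) :
    ∑ x ∈ chainQuadruples n, (quadWeight ((x.2.1, x.1), (x.2.1 + x.2.2.2, x.2.2.1)) +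
      quadWeight ((x.2.1 + x.2.2.2, x.2.2.1), (x.2.1, x.1))) = 0 := by
  let K : ℕ × ℕ × ℕ × ℕ → ℚ := fun x => (x.1 : ℚ) ^ 2 + x.1 * x.2.2.1 + (x.2.2.1 : ℚ) ^ 2
  calc _ = ∑ x ∈ chainQuadruples n, (K x - K (x.2.2.2, x.2.2.1, x.2.1, x.1)) := by
        refine sum_congr rfl fun x _ => ?_
        simp only [quadWeight, K]
        push_cast
        ring
    _ = 0 := by rw [sum_sub_distrib, sum_chainQuadruples_comp_reverse n K, sub_self]

lemma sum_Ico_one_natCast (N : ℕ) : ∑ u ∈ Ico 1 N, (u : ℚ) = N * (N - 1) / 2 := by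
  induction N with
  | zero => simp
  | succ N ih =>
    rcases N.eq_zero_or_pos with rfl | hN
    · simp
    · rw [sum_Ico_succ_top hN, ih]
      push_cast
      ring

lemma sum_Ico_one_natCast_sq (N : ℕ) :
    ∑ u ∈ Ico 1 N, (u : ℚ) ^ 2 = N * (N - 1) * (2 * N - 1) / 6 := by
  induction N with
  | zero => simp
  | succ N ih =>
    rcases N.eq_zero_or_pos with rfl | hN
    · simp
    · rw [sum_Ico_succ_top hN, ih]
      push_cast
      ring

lemma sum_Ico_quadWeight (d : ℕ) {N : ℕ} (hN : N ≠ 0) :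
    ∑ u ∈ Ico 1 N, quadWeight ((d, u), (d, N - u)) =
      (5 * (N : ℚ) ^ 3 - 6 * N ^ 2 + N) / 12 - (d : ℚ) ^ 2 * ((N : ℚ) - 1) / 2 := by
  have hterm : ∀ u ∈ Ico 1 N, quadWeight ((d, u), (d, N - u)) =
      (N : ℚ) / 2 * u + (u : ℚ) ^ 2 / 2 - (d : ℚ) ^ 2 / 2 := by
    intro u hu
    simp only [quadWeight]
    push_cast [(mem_Ico.mp hu).2.le]
    ring
  rw [sum_congr rfl hterm, sum_sub_distrib, sum_add_distrib, ← mul_sum, ← sum_div,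
    sum_Ico_one_natCast, sum_Ico_one_natCast_sq, sum_const, Nat.card_Ico, nsmul_eq_mul,
    Nat.cast_sub (Nat.one_le_iff_ne_zero.mpr hN)]
  push_cast
  ring

lemma sum_divisorsAntidiagonal_eq_sig (n : ℕ) :
    ∑ p ∈ n.divisorsAntidiagonal,
        ((5 * (p.2 : ℚ) ^ 3 - 6 * p.2 ^ 2 + p.2) / 12 - (p.1 : ℚ) ^ 2 * ((p.2 : ℚ) - 1) / 2) =
      5 / 12 * (sig 3 n : ℚ) + (1 - 6 * (n : ℚ)) / 12 * sig 1 n := by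
  have hd : ∀ p ∈ n.divisorsAntidiagonal, (p.1 : ℚ) ^ 2 * ((p.2 : ℚ) - 1) / 2 =
      n * p.1 / 2 - (p.1 : ℚ) ^ 2 / 2 := by
    intro p hp
    have h : (p.1 : ℚ) * p.2 = n := by exact_mod_cast (Nat.mem_divisorsAntidiagonal.mp hp).1
    linear_combination (p.1 : ℚ) / 2 * h
  rw [sum_sub_distrib, sum_congr rfl hd, sum_sub_distrib,
    Nat.sum_divisorsAntidiagonal' fun _ N => (5 * (N : ℚ) ^ 3 - 6 * N ^ 2 + N) / 12,
    Nat.sum_divisorsAntidiagonal fun d _ => (n : ℚ) * d / 2,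
    Nat.sum_divisorsAntidiagonal fun d _ => (d : ℚ) ^ 2 / 2, sig, sig]
  push_cast
  simp only [pow_one, mul_sum, ← sum_sub_distrib, ← sum_add_distrib]
  refine sum_congr rfl fun d _ => ?_
  ring

theorem W_one_one_general (n : ℕ) :
    (W 1 1 n : ℚ) = 5/12 * sig 3 n + (1 - 6 * n)/12 * sig 1 n := by
  rw [W_one_one_eq_sum_divisorQuadruples]
  push_cast
  rw [← sum_quadWeight_eq, sum_divisorQuadruples_eq, sum_chainQuadruples_quadWeight, zero_add,
    ← sum_divisorsAntidiagonal_eq_sig]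
  exact sum_congr rfl fun p hp =>
    sum_Ico_quadWeight p.1 (Nat.right_ne_zero_of_mem_divisorsAntidiagonal hp)

/-- W(1,1;n) = (5/12)σ₃(n) + ((1−6n)/12)σ(n). -/
theorem W_one_one (n : ℕ) (hn : 0 < n) :
    (W 1 1 n : ℚ) = 5/12 * sig 3 n + (1 - 6 * n)/12 * sig 1 n :=
  W_one_one_general n
end

section
/- Assume E₂(−1/z)=z²(E₂(z)−1/(2πiz)) and E₂(z+1)=E₂(z) for all z in the upper half plane. Let p₁,p₂ be distinct primes and L_{p₁p₂}(z)=E₂(z)−p₁p₂E₂(p₁p₂z). Then with A_{p₁}=[[−1,0],[p₁,−1]], L_{p₁p₂}(A_{p₁}⁻¹z)=(p₁z+1)²(E₂(z)−(p₁/p₂)E₂((p₁z+1)/p₂)). -/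
open Finset Real Complex

/-- The weight-2 Eisenstein series E₂(z) = 1 − 24 Σ_{n≥1} σ(n) e^{2πinz}
(the n = 0 term of the tsum vanishes since sig 1 0 = 0). -/
noncomputable def E2 (z : ℂ) : ℂ :=
  1 - 24 * ∑' n : ℕ, (sig 1 n : ℂ) * Complex.exp (2 * Real.pi * Complex.I * n * z)

/-- L_t(z) = E₂(z) − t E₂(tz). -/
noncomputable def L (t : ℕ) (z : ℂ) : ℂ := E2 z - t * E2 (t * z)

/-! `A_{p₁}⁻¹ = [[1, 0], [p₁, 1]]` factors as `S T^{-p₁} S⁻¹`, so the S- and T-laws give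
`E₂(z/q) = q² E₂(z) − p₁ q/(2πi)` with `q = p₁ z + 1`. On the other side
`p₁ p₂ z/q = p₂ − 1/s` with `s = q/p₂`, so `E₂(p₁ p₂ z/q) = s² E₂(s) − s/(2πi)`. In
`L_{p₁p₂}` the two non-holomorphic terms `∓ p₁ q/(2πi)` cancel. -/

section TransformationLaws

variable {f : ℂ → ℂ}

lemma im_neg_one_div_pos {w : ℂ} (hw : 0 < w.im) : 0 < (-1 / w).im := by
  rw [neg_div, one_div, ← inv_neg]
  exact UpperHalfPlane.im_inv_neg_coe_pos ⟨w, hw⟩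

lemma apply_add_natCast (hT : ∀ z : ℂ, 0 < z.im → f (z + 1) = f z)
    (n : ℕ) {w : ℂ} (hw : 0 < w.im) : f (w + n) = f w := by
  induction n with
  | zero => simp
  | succ k ih =>
    rw [Nat.cast_succ, ← add_assoc, hT _ (by simpa using hw), ih]

lemma apply_neg_one_div
    (hS : ∀ z : ℂ, 0 < z.im → f (-1 / z) = z ^ 2 * (f z - 1 / (2 * π * I * z)))
    {w : ℂ} (hw : 0 < w.im) : f (-1 / w) = w ^ 2 * f w - w / (2 * π * I) := by
  have hw0 : w ≠ 0 := fun h => by simp [h] at hw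
  rw [hS w hw]
  field_simp

lemma apply_natCast_sub_one_div
    (hS : ∀ z : ℂ, 0 < z.im → f (-1 / z) = z ^ 2 * (f z - 1 / (2 * π * I * z)))
    (hT : ∀ z : ℂ, 0 < z.im → f (z + 1) = f z)
    (n : ℕ) {w : ℂ} (hw : 0 < w.im) : f (n - 1 / w) = w ^ 2 * f w - w / (2 * π * I) := by
  rw [sub_eq_add_neg, ← neg_div, add_comm, apply_add_natCast hT n (im_neg_one_div_pos hw),
    apply_neg_one_div hS hw]

lemma apply_div_natCast_mul_add_one
    (hS : ∀ z : ℂ, 0 < z.im → f (-1 / z) = z ^ 2 * (f z - 1 / (2 * π * I * z)))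
    (hT : ∀ z : ℂ, 0 < z.im → f (z + 1) = f z)
    (c : ℕ) {z : ℂ} (hz : 0 < z.im) :
    f (z / (c * z + 1)) = (c * z + 1) ^ 2 * f z - c * (c * z + 1) / (2 * π * I) := by
  have hz0 : z ≠ 0 := fun h => by simp [h] at hz
  have hw_eq : -(c * z + 1) / z = -1 / z - c := by field_simp; ring
  have hw : 0 < (-(c * z + 1) / z).im := by
    rw [hw_eq]; simpa using im_neg_one_div_pos hz
  have hzw : z / (c * z + 1) = -1 / (-(c * z + 1) / z) := by
    rw [neg_div _ (c * z + 1 : ℂ), neg_div_neg_eq, one_div_div]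
  have hfw : f (-(c * z + 1) / z) = f (-1 / z) := by
    rw [← apply_add_natCast hT c hw, hw_eq, sub_add_cancel]
  rw [hzw, apply_neg_one_div hS hw, hfw, apply_neg_one_div hS hz]
  field_simp
  ring

end TransformationLaws

theorem L_at_cusp_one_over_p1_general
    (hS : ∀ z : ℂ, 0 < z.im →
      E2 (-1 / z) = z ^ 2 * (E2 z - 1 / (2 * Real.pi * Complex.I * z)))
    (hT : ∀ z : ℂ, 0 < z.im → E2 (z + 1) = E2 z)
    (p₁ p₂ : ℕ) (hp₁ : p₁.Prime) (hp₂ : p₂.Prime)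
    (z : ℂ) (hz : 0 < z.im) :
    L (p₁ * p₂) (z / (p₁ * z + 1))
      = ((p₁ : ℂ) * z + 1) ^ 2 * (E2 z - ((p₁ : ℂ) / (p₂ : ℂ)) * E2 (((p₁ : ℂ) * z + 1) / (p₂ : ℂ))) := by
  have hp₁0 : (0 : ℝ) < p₁ := mod_cast hp₁.pos
  have hp₂0 : (0 : ℝ) < p₂ := mod_cast hp₂.pos
  have hq : 0 < ((p₁ : ℂ) * z + 1).im := by simpa using mul_pos hp₁0 hz
  have hs : 0 < (((p₁ : ℂ) * z + 1) / p₂).im := by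
    simpa [Complex.div_natCast_im] using div_pos hq hp₂0
  have hq0 : (p₁ : ℂ) * z + 1 ≠ 0 := fun h => by simp [h] at hq
  have hp₂ℂ : (p₂ : ℂ) ≠ 0 := mod_cast hp₂.ne_zero
  have hmul : ((p₁ * p₂ : ℕ) : ℂ) * (z / (p₁ * z + 1)) = p₂ - 1 / ((p₁ * z + 1) / p₂) := by
    push_cast
    field_simp
    ring
  rw [L, hmul, apply_natCast_sub_one_div hS hT p₂ hs, apply_div_natCast_mul_add_one hS hT p₁ hz,
    Nat.cast_mul]
  field_simp
  ring

/-- Assuming the S- and T-transformations of E₂, the Fourier expansion of L_{p₁p₂}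
at the cusp 1/p₁: L_{p₁p₂}(A_{p₁}⁻¹z) = (p₁z+1)²(E₂(z) − (p₁/p₂)E₂((p₁z+1)/p₂)),
where A_{p₁}⁻¹z = z/(p₁z+1). -/
theorem L_at_cusp_one_over_p1
    (hS : ∀ z : ℂ, 0 < z.im →
      E2 (-1 / z) = z ^ 2 * (E2 z - 1 / (2 * Real.pi * Complex.I * z)))
    (hT : ∀ z : ℂ, 0 < z.im → E2 (z + 1) = E2 z)
    (p₁ p₂ : ℕ) (hp₁ : p₁.Prime) (hp₂ : p₂.Prime) (hne : p₁ ≠ p₂)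
    (z : ℂ) (hz : 0 < z.im) :
    L (p₁ * p₂) (z / (p₁ * z + 1))
      = ((p₁ : ℂ) * z + 1) ^ 2 * (E2 z - ((p₁ : ℂ) / (p₂ : ℂ)) * E2 (((p₁ : ℂ) * z + 1) / (p₂ : ℂ))) :=
  L_at_cusp_one_over_p1_general hS hT p₁ p₂ hp₁ hp₂ z hz
end

section
/- For distinct primes p₁,p₂, the unique solution (b₁,b₂,b₃,b₄) of the system b₁+b₂+b₃+b₄=(1−p₁p₂)², b₁+b₂/p₁⁴+b₃/p₂⁴+b₄/(p₁⁴p₂⁴)=((1−p₁p₂)/(p₁p₂))², b₁+b₂+b₃/p₂⁴+b₄/p₂⁴=(1−p₁/p₂)², b₁+b₂/p₁⁴+b₃+b₄/p₁⁴=(1−p₂/p₁)² is b₁=1−2p₁p₂/((p₁²+1)(p₂²+1)), b₂=−2p₁³p₂/((p₁²+1)(p₂²+1)), b₃=−2p₁p₂³/((p₁²+1)(p₂²+1)), b₄=p₁²p₂²−2p₁³p₂³/((p₁²+1)(p₂²+1)). -/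
theorem bilinear_eq_of_eq_on_grid {R : Type*} [CommRing R] [IsDomain R] {x y : R}
    (hx : x ≠ 1) (hy : y ≠ 1) {a₁ a₂ a₃ a₄ b₁ b₂ b₃ b₄ : R}
    (h : ∀ s ∈ ({1, x} : Set R), ∀ t ∈ ({1, y} : Set R),
      a₁ + a₂ * s + a₃ * t + a₄ * (s * t) = b₁ + b₂ * s + b₃ * t + b₄ * (s * t)) :
    a₁ = b₁ ∧ a₂ = b₂ ∧ a₃ = b₃ ∧ a₄ = b₄ := by
  have h11 := h 1 (by simp) 1 (by simp)
  have hx1 := h x (by simp) 1 (by simp)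
  have h1y := h 1 (by simp) y (by simp)
  have hxy := h x (by simp) y (by simp)
  have hne : (x - 1) * (y - 1) ≠ 0 := mul_ne_zero (sub_ne_zero.2 hx) (sub_ne_zero.2 hy)
  refine ⟨?_, ?_, ?_, ?_⟩ <;> apply mul_left_cancel₀ hne
  · linear_combination x * y * h11 - y * hx1 - x * h1y + hxy
  · linear_combination -y * h11 + y * hx1 + h1y - hxy
  · linear_combination -x * h11 + hx1 + x * h1y - hxy
  · linear_combination h11 - hx1 - h1y + hxy

section CuspSystem

variable {K : Type*} [Field K]

def CuspSystem (P Q b₁ b₂ b₃ b₄ : K) : Prop :=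
  b₁ + b₂ + b₃ + b₄ = (1 - P * Q) ^ 2 ∧
  b₁ + b₂ / P ^ 4 + b₃ / Q ^ 4 + b₄ / (P ^ 4 * Q ^ 4) = ((1 - P * Q) / (P * Q)) ^ 2 ∧
  b₁ + b₂ + b₃ / Q ^ 4 + b₄ / Q ^ 4 = (1 - P / Q) ^ 2 ∧
  b₁ + b₂ / P ^ 4 + b₃ + b₄ / P ^ 4 = (1 - Q / P) ^ 2

theorem CuspSystem.eq_on_grid {P Q a₁ a₂ a₃ a₄ b₁ b₂ b₃ b₄ : K}
    (ha : CuspSystem P Q a₁ a₂ a₃ a₄) (hb : CuspSystem P Q b₁ b₂ b₃ b₄) :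
    ∀ s ∈ ({1, (P ^ 4)⁻¹} : Set K), ∀ t ∈ ({1, (Q ^ 4)⁻¹} : Set K),
      a₁ + a₂ * s + a₃ * t + a₄ * (s * t) = b₁ + b₂ * s + b₃ * t + b₄ * (s * t) := by
  obtain ⟨ha11, haxy, ha1y, hax1⟩ := ha
  obtain ⟨hb11, hbxy, hb1y, hbx1⟩ := hb
  rintro s (rfl | rfl) t (rfl | rfl)
  · linear_combination ha11 - hb11
  · linear_combination ha1y - hb1y
  · linear_combination hax1 - hbx1
  · linear_combination haxy - hbxy

theorem cuspSystem_iff {P Q : K} (hP : P ≠ 0) (hQ : Q ≠ 0) (hP4 : P ^ 4 ≠ 1) (hQ4 : Q ^ 4 ≠ 1)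
    (b₁ b₂ b₃ b₄ : K) :
    CuspSystem P Q b₁ b₂ b₃ b₄ ↔
      (b₁ = 1 - 2 * P * Q / ((P ^ 2 + 1) * (Q ^ 2 + 1)) ∧
       b₂ = -2 * P ^ 3 * Q / ((P ^ 2 + 1) * (Q ^ 2 + 1)) ∧
       b₃ = -2 * P * Q ^ 3 / ((P ^ 2 + 1) * (Q ^ 2 + 1)) ∧
       b₄ = P ^ 2 * Q ^ 2 - 2 * P ^ 3 * Q ^ 3 / ((P ^ 2 + 1) * (Q ^ 2 + 1))) := by
  have hP2 : P ^ 2 + 1 ≠ 0 := fun h ↦ hP4 (by linear_combination (P ^ 2 - 1) * h)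
  have hQ2 : Q ^ 2 + 1 ≠ 0 := fun h ↦ hQ4 (by linear_combination (Q ^ 2 - 1) * h)
  have hsol : CuspSystem P Q (1 - 2 * P * Q / ((P ^ 2 + 1) * (Q ^ 2 + 1)))
      (-2 * P ^ 3 * Q / ((P ^ 2 + 1) * (Q ^ 2 + 1))) (-2 * P * Q ^ 3 / ((P ^ 2 + 1) * (Q ^ 2 + 1)))
      (P ^ 2 * Q ^ 2 - 2 * P ^ 3 * Q ^ 3 / ((P ^ 2 + 1) * (Q ^ 2 + 1))) := by
    refine ⟨?_, ?_, ?_, ?_⟩ <;> field_simp <;> ring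
  constructor
  · intro hb
    exact bilinear_eq_of_eq_on_grid (inv_ne_one.2 hP4) (inv_ne_one.2 hQ4) (hb.eq_on_grid hsol)
  · rintro ⟨rfl, rfl, rfl, rfl⟩
    exact hsol

end CuspSystem

theorem Nat.Prime.cast_pow_ne_one {p : ℕ} (hp : p.Prime) {n : ℕ} (hn : n ≠ 0) :
    (p : ℚ) ^ n ≠ 1 :=
  (one_lt_pow₀ (by exact_mod_cast hp.one_lt) hn).ne'

theorem linear_system_p1p2_sq_general (p₁ p₂ : ℕ) (hp₁ : p₁.Prime) (hp₂ : p₂.Prime)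
    (b₁ b₂ b₃ b₄ : ℚ) :
    (b₁ + b₂ + b₃ + b₄ = (1 - (p₁ : ℚ) * (p₂ : ℚ))^2 ∧
     b₁ + b₂ / (p₁ : ℚ)^4 + b₃ / (p₂ : ℚ)^4 + b₄ / ((p₁ : ℚ)^4 * (p₂ : ℚ)^4)
        = ((1 - (p₁ : ℚ) * (p₂ : ℚ)) / ((p₁ : ℚ) * (p₂ : ℚ)))^2 ∧
     b₁ + b₂ + b₃ / (p₂ : ℚ)^4 + b₄ / (p₂ : ℚ)^4 = (1 - (p₁ : ℚ)/(p₂ : ℚ))^2 ∧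
     b₁ + b₂ / (p₁ : ℚ)^4 + b₃ + b₄ / (p₁ : ℚ)^4 = (1 - (p₂ : ℚ)/(p₁ : ℚ))^2) ↔
    (b₁ = 1 - 2 * p₁ * p₂ / (((p₁ : ℚ)^2 + 1) * ((p₂ : ℚ)^2 + 1)) ∧
     b₂ = -2 * (p₁ : ℚ)^3 * p₂ / (((p₁ : ℚ)^2 + 1) * ((p₂ : ℚ)^2 + 1)) ∧
     b₃ = -2 * (p₁ : ℚ) * (p₂ : ℚ)^3 / (((p₁ : ℚ)^2 + 1) * ((p₂ : ℚ)^2 + 1)) ∧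
     b₄ = (p₁ : ℚ)^2 * (p₂ : ℚ)^2
          - 2 * (p₁ : ℚ)^3 * (p₂ : ℚ)^3 / (((p₁ : ℚ)^2 + 1) * ((p₂ : ℚ)^2 + 1))) :=
  cuspSystem_iff (by exact_mod_cast hp₁.ne_zero) (by exact_mod_cast hp₂.ne_zero)
    (hp₁.cast_pow_ne_one four_ne_zero) (hp₂.cast_pow_ne_one four_ne_zero) b₁ b₂ b₃ b₄

/-- The unique solution of the 4×4 linear system coming from the constant terms of
(L_{p₁p₂})² and E₄(dz) at the cusps of Γ₀(p₁p₂). -/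
theorem linear_system_p1p2_sq (p₁ p₂ : ℕ) (hp₁ : p₁.Prime) (hp₂ : p₂.Prime) (hne : p₁ ≠ p₂)
    (b₁ b₂ b₃ b₄ : ℚ) :
    (b₁ + b₂ + b₃ + b₄ = (1 - (p₁ : ℚ) * (p₂ : ℚ))^2 ∧
     b₁ + b₂ / (p₁ : ℚ)^4 + b₃ / (p₂ : ℚ)^4 + b₄ / ((p₁ : ℚ)^4 * (p₂ : ℚ)^4)
        = ((1 - (p₁ : ℚ) * (p₂ : ℚ)) / ((p₁ : ℚ) * (p₂ : ℚ)))^2 ∧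
     b₁ + b₂ + b₃ / (p₂ : ℚ)^4 + b₄ / (p₂ : ℚ)^4 = (1 - (p₁ : ℚ)/(p₂ : ℚ))^2 ∧
     b₁ + b₂ / (p₁ : ℚ)^4 + b₃ + b₄ / (p₁ : ℚ)^4 = (1 - (p₂ : ℚ)/(p₁ : ℚ))^2) ↔
    (b₁ = 1 - 2 * p₁ * p₂ / (((p₁ : ℚ)^2 + 1) * ((p₂ : ℚ)^2 + 1)) ∧
     b₂ = -2 * (p₁ : ℚ)^3 * p₂ / (((p₁ : ℚ)^2 + 1) * ((p₂ : ℚ)^2 + 1)) ∧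
     b₃ = -2 * (p₁ : ℚ) * (p₂ : ℚ)^3 / (((p₁ : ℚ)^2 + 1) * ((p₂ : ℚ)^2 + 1)) ∧
     b₄ = (p₁ : ℚ)^2 * (p₂ : ℚ)^2
          - 2 * (p₁ : ℚ)^3 * (p₂ : ℚ)^3 / (((p₁ : ℚ)^2 + 1) * ((p₂ : ℚ)^2 + 1))) :=
  linear_system_p1p2_sq_general p₁ p₂ hp₁ hp₂ b₁ b₂ b₃ b₄
end

section
/- The square of L₂(z)=E₂(z)−2E₂(2z) equals (1/5)E₄(z)+(4/5)E₄(2z), i.e., (E₂(z)−2E₂(2z))² = (1/5)E₄(z)+(4/5)E₄(2z) as q-series (equivalently, as holomorphic functions on the upper half plane). -/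
/-!
Write `E₂(q) - 2E₂(q²) = -1 + 24 ∑ w(n) qⁿ` with `w(n) = ∑_{d ∣ n} (-1)^{n/d} d`, which equals
`2σ(n/2) - σ(n)` (with `σ(n/2) = 0` for odd `n`). The coefficient identity then reduces to
evaluating `∑_{i+j=n} w(i) w(j) = ∑_{ax+by=n} ab (-1)^{x+y}`, a sum over the positive solutions of
`ax + by = n`. We use Liouville's elementary method: the shear `(a,b,x,y) ↦ (a+b,b,x,y-x)` maps
the solutions with `x < y` bijectively onto those with `b < a`, so, together with the symmetry
`(a,b,x,y) ↦ (b,a,y,x)`, the shear defect of any function `h`, summed over `x < y`, is the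
difference of the sums of `h` over the diagonals `x = y` and `a = b`. For
`h = a²((-1)^y + (-1)^{x+y})/2 - ab(-1)^{x+y}/2` that defect is `2ab(-1)^{x+y}`, and the diagonal
sums are divisor sums of cubic polynomials, that is, combinations of `σ₁, σ₂, σ₃` at `n` and `n/2`.
-/

open Finset PowerSeries

/-- The formal power series E₂(q^t) = 1 − 24 Σ_{m≥1} σ(m) q^{tm}. -/
noncomputable def E2t (t : ℕ) : PowerSeries ℚ :=
  PowerSeries.mk fun n => if n = 0 then 1 else if t ∣ n then -24 * (sig 1 (n / t) : ℚ) else 0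

/-- The formal power series E₄(q^t) = 1 + 240 Σ_{m≥1} σ₃(m) q^{tm}. -/
noncomputable def E4t (t : ℕ) : PowerSeries ℚ :=
  PowerSeries.mk fun n => if n = 0 then 1 else if t ∣ n then 240 * (sig 3 (n / t) : ℚ) else 0

lemma sum_range_eq_add_sum_Ioo {M : Type*} [AddCommMonoid M] {D : ℕ} (hD : 0 < D) (f : ℕ → M) :
    ∑ a ∈ range D, f a = f 0 + ∑ a ∈ Ioo 0 D, f a := by
  rw [range_eq_Ico, sum_eq_sum_Ico_succ_bot hD, Ico_add_one_left_eq_Ioo]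

lemma sum_Ioo_zero_eq_sum_range {M : Type*} [AddCommMonoid M] {f : ℕ → M} (hf : f 0 = 0)
    (D : ℕ) : ∑ a ∈ Ioo 0 D, f a = ∑ a ∈ range D, f a :=
  sum_subset (fun a ha => mem_range.2 (mem_Ioo.1 ha).2) fun a ha ha' => by
    obtain rfl : a = 0 := by simp only [mem_range, mem_Ioo] at ha ha'; omega
    exact hf

lemma sum_range_natCast (D : ℕ) : ∑ a ∈ range D, (a : ℚ) = D * (D - 1) / 2 := by
  induction D with
  | zero => simp
  | succ D ih => rw [sum_range_succ, ih]; push_cast; ring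

lemma sum_range_natCast_sq (D : ℕ) :
    ∑ a ∈ range D, (a : ℚ) ^ 2 = D * (D - 1) * (2 * D - 1) / 6 := by
  induction D with
  | zero => simp
  | succ D ih => rw [sum_range_succ, ih]; push_cast; ring

lemma sum_Ioo_natCast_sq (D : ℕ) :
    ∑ a ∈ Ioo 0 D, (a : ℚ) ^ 2 = (2 * D ^ 3 - 3 * D ^ 2 + D) / 6 := by
  rw [sum_Ioo_zero_eq_sum_range (by simp), sum_range_natCast_sq]; ring

lemma sum_Ioo_natCast_mul_sub (D : ℕ) :
    ∑ a ∈ Ioo 0 D, (a : ℚ) * ((D - a : ℕ) : ℚ) = (D ^ 3 - D) / 6 := by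
  have hcast : ∀ a ∈ range D, (a : ℚ) * ((D - a : ℕ) : ℚ) = D * a - a ^ 2 := fun a ha => by
    rw [Nat.cast_sub (mem_range.1 ha).le]; ring
  rw [sum_Ioo_zero_eq_sum_range (by simp), sum_congr rfl hcast, sum_sub_distrib, ← mul_sum,
    sum_range_natCast, sum_range_natCast_sq]
  ring

lemma sum_Ioo_neg_one_pow {D : ℕ} (hD : 0 < D) :
    ∑ a ∈ Ioo 0 D, (-1 : ℚ) ^ a = if Even D then -1 else 0 := by
  have hsplit := sum_range_eq_add_sum_Ioo hD fun a => (-1 : ℚ) ^ a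
  rw [neg_one_geom_sum] at hsplit
  split_ifs at hsplit ⊢ <;> linarith

lemma sig_cast (k n : ℕ) : (sig k n : ℚ) = ∑ d ∈ n.divisors, (d : ℚ) ^ k := by
  simp [sig]

lemma sum_divisors_ite_two_dvd_div {M : Type*} [AddCommMonoid M] (n : ℕ) (f : ℕ → M) :
    ∑ d ∈ n.divisors, (if 2 ∣ n / d then f d else 0)
      = if 2 ∣ n then ∑ d ∈ (n / 2).divisors, f d else 0 := by
  rcases eq_or_ne n 0 with rfl | hn0
  · simp
  rw [← sum_filter]
  split_ifs with hn
  · rw [← Nat.divisors_filter_dvd_of_dvd hn0 (Nat.div_dvd_of_dvd hn)]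
    refine sum_congr (filter_congr fun d hd => ?_) fun _ _ => rfl
    rw [Nat.dvd_div_iff_mul_dvd (Nat.dvd_of_mem_divisors hd), Nat.dvd_div_iff_mul_dvd hn,
      mul_comm]
  · refine sum_eq_zero fun d hd => absurd ?_ hn
    rw [mem_filter] at hd
    exact hd.2.trans (Nat.div_dvd_of_dvd (Nat.dvd_of_mem_divisors hd.1))

lemma sum_divisors_neg_one_pow_div_mul {R : Type*} [CommRing R] (n : ℕ) (c : ℕ → R) :
    ∑ d ∈ n.divisors, (-1) ^ (n / d) * c d
      = 2 * (if 2 ∣ n then ∑ d ∈ (n / 2).divisors, c d else 0) - ∑ d ∈ n.divisors, c d := by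
  have hsign : ∀ d, (-1 : R) ^ (n / d) * c d = 2 * (if 2 ∣ n / d then c d else 0) - c d := by
    intro d
    rcases Nat.even_or_odd (n / d) with h | h
    · rw [h.neg_one_pow, if_pos h.two_dvd]; ring
    · rw [h.neg_one_pow, if_neg (Nat.not_even_iff_odd.2 h ∘ even_iff_two_dvd.2)]; ring
  rw [sum_congr rfl fun d _ => hsign d, sum_sub_distrib, ← mul_sum,
    sum_divisors_ite_two_dvd_div]

section Involution

variable {α β M : Type*} [AddCommMonoid M] {s : Finset α} {σ : α → α}

lemma sum_filter_eq_sum_filter_comp (hσ : Function.Involutive σ) (hs : ∀ q ∈ s, σ q ∈ s)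
    (P : α → Prop) [DecidablePred P] (f : α → M) :
    ∑ q ∈ s with P q, f q = ∑ q ∈ s with P (σ q), f (σ q) :=
  sum_nbij' σ σ (fun q hq => by simp_all [hσ q]) (fun q hq => by simp_all)
    (fun q _ => hσ q) (fun q _ => hσ q) (fun q _ => by rw [hσ q])

lemma sum_eq_sum_filter_lt_add_sum_filter_eq (hσ : Function.Involutive σ)
    (hs : ∀ q ∈ s, σ q ∈ s) [LinearOrder β] {u v : α → β} (hu : ∀ q, u (σ q) = v q) (h : α → M) :
    ∑ q ∈ s, h q = ∑ q ∈ s with v q < u q, (h q + h (σ q)) + ∑ q ∈ s with v q = u q, h q := by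
  have hv : ∀ q, v (σ q) = u q := fun q => by rw [← hu, hσ q]
  have hlt : ∑ q ∈ s with u q < v q, h q = ∑ q ∈ s with v q < u q, h (σ q) := by
    rw [sum_filter_eq_sum_filter_comp hσ hs]
    simp only [hu, hv]
  rw [sum_add_distrib, ← hlt, ← sum_filter_add_sum_filter_not s (fun q => v q < u q),
    ← sum_filter_add_sum_filter_not (s.filter fun q => ¬ v q < u q) (fun q => u q < v q),
    filter_filter, filter_filter, add_assoc]
  congr 2 <;> refine sum_congr (filter_congr fun q _ => ?_) fun _ _ => rfl
  · exact and_iff_right_of_imp lt_asymm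
  · rw [not_lt, not_lt, eq_comm, le_antisymm_iff]

end Involution

abbrev Quad := (ℕ × ℕ) × (ℕ × ℕ)

def reps (n : ℕ) : Finset Quad :=
  ((range (n + 1) ×ˢ range (n + 1)) ×ˢ (range (n + 1) ×ˢ range (n + 1))).filter fun q =>
    0 < q.1.1 ∧ 0 < q.1.2 ∧ 0 < q.2.1 ∧ 0 < q.2.2 ∧ q.1.1 * q.2.1 + q.1.2 * q.2.2 = n

lemma mem_reps {n a b x y : ℕ} :
    ((a, b), (x, y)) ∈ reps n ↔ 0 < a ∧ 0 < b ∧ 0 < x ∧ 0 < y ∧ a * x + b * y = n := by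
  simp only [reps, mem_filter, mem_product, mem_range, and_iff_right_iff_imp]
  rintro ⟨ha, hb, hx, hy, rfl⟩
  have := Nat.le_mul_of_pos_right a hx
  have := Nat.le_mul_of_pos_left x ha
  have := Nat.le_mul_of_pos_right b hy
  have := Nat.le_mul_of_pos_left y hb
  omega

def swapQ (q : Quad) : Quad := ((q.1.2, q.1.1), (q.2.2, q.2.1))

def reverseQ (q : Quad) : Quad := ((q.2.2, q.2.1), (q.1.2, q.1.1))

def shear (q : Quad) : Quad := ((q.1.1 + q.1.2, q.1.2), (q.2.1, q.2.2 - q.2.1))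

lemma swapQ_involutive : Function.Involutive swapQ := fun _ => rfl

lemma swapQ_mem_reps {n : ℕ} : ∀ q ∈ reps n, swapQ q ∈ reps n := by
  rintro ⟨⟨a, b⟩, x, y⟩
  simp only [swapQ, mem_reps]
  omega

lemma reverseQ_involutive : Function.Involutive reverseQ := fun _ => rfl

lemma reverseQ_mem_reps {n : ℕ} : ∀ q ∈ reps n, reverseQ q ∈ reps n := by
  rintro ⟨⟨a, b⟩, x, y⟩
  simp only [reverseQ, mem_reps]
  rintro ⟨ha, hb, hx, hy, rfl⟩
  exact ⟨hy, hx, hb, ha, by ring⟩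

lemma sum_reps_filter_lt_shear (n : ℕ) (g : Quad → ℚ) :
    ∑ q ∈ reps n with q.1.2 < q.1.1, g q = ∑ q ∈ reps n with q.2.1 < q.2.2, g (shear q) := by
  refine sum_nbij' (fun q => ((q.1.1 - q.1.2, q.1.2), (q.2.1, q.2.2 + q.2.1))) shear
    ?_ ?_ ?_ ?_ ?_
  · rintro ⟨⟨a, b⟩, x, y⟩
    simp only [mem_filter, mem_reps]
    rintro ⟨⟨ha, hb, hx, hy, rfl⟩, hba⟩
    obtain ⟨c, rfl⟩ := Nat.exists_eq_add_of_lt hba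
    refine ⟨⟨by omega, hb, hx, by omega, ?_⟩, by omega⟩
    rw [show b + c + 1 - b = c + 1 by omega]; ring
  · rintro ⟨⟨a, b⟩, x, y⟩
    simp only [shear, mem_filter, mem_reps]
    rintro ⟨⟨ha, hb, hx, hy, rfl⟩, hxy⟩
    obtain ⟨c, rfl⟩ := Nat.exists_eq_add_of_lt hxy
    refine ⟨⟨by omega, hb, hx, by omega, ?_⟩, by omega⟩
    rw [show x + c + 1 - x = c + 1 by omega]; ring
  · rintro ⟨⟨a, b⟩, x, y⟩ hq
    have hba : b < a := (mem_filter.1 hq).2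
    simp only [shear, Prod.mk.injEq, and_true, true_and]
    omega
  · rintro ⟨⟨a, b⟩, x, y⟩ hq
    have hxy : x < y := (mem_filter.1 hq).2
    simp only [shear, Prod.mk.injEq, and_true, true_and]
    omega
  · rintro ⟨⟨a, b⟩, x, y⟩ hq
    have hba : b < a := (mem_filter.1 hq).2
    simp only [shear]
    congr <;> omega

lemma sum_reps_shear_sub (n : ℕ) (h : Quad → ℚ) :
    ∑ q ∈ reps n with q.2.1 < q.2.2, (h (shear q) + h (swapQ (shear q)) - h q - h (swapQ q))
      = ∑ q ∈ reps n with q.2.1 = q.2.2, h q - ∑ q ∈ reps n with q.1.2 = q.1.1, h q := by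
  have hleft := sum_eq_sum_filter_lt_add_sum_filter_eq swapQ_involutive (swapQ_mem_reps (n := n))
    (u := fun q => q.1.1) (v := fun q => q.1.2) (fun _ => rfl) h
  have hright := sum_eq_sum_filter_lt_add_sum_filter_eq swapQ_involutive (swapQ_mem_reps (n := n))
    (u := fun q => q.2.2) (v := fun q => q.2.1) (fun _ => rfl) h
  rw [sum_reps_filter_lt_shear n fun q => h q + h (swapQ q)] at hleft
  simp only [sum_sub_distrib, sum_add_distrib] at hleft hright ⊢
  linear_combination hright - hleft

lemma sum_reps_filter_right_eq (n : ℕ) (f : Quad → ℚ) :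
    ∑ q ∈ reps n with q.2.1 = q.2.2, f q
      = ∑ e ∈ n.divisors, ∑ a ∈ Ioo 0 (n / e), f ((a, n / e - a), (e, e)) := by
  rw [← sum_sigma n.divisors (fun e => Ioo 0 (n / e))
    fun p => f ((p.2, n / p.1 - p.2), (p.1, p.1))]
  have hdiv : ∀ {a b x : ℕ}, 0 < x → a * x + b * x = n → n / x = a + b := fun hx he => by
    rw [← he, ← add_mul, Nat.mul_div_cancel _ hx]
  have hback : ∀ q ∈ {q ∈ reps n | q.2.1 = q.2.2},
      ((q.1.1, n / q.2.1 - q.1.1), (q.2.1, q.2.1)) = q := by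
    rintro ⟨⟨a, b⟩, x, y⟩
    simp only [mem_filter, mem_reps]
    rintro ⟨⟨-, -, hx, -, he⟩, rfl⟩
    rw [hdiv hx he, Nat.add_sub_cancel_left]
  refine sum_nbij' (fun q => ⟨q.2.1, q.1.1⟩) (fun p => ((p.2, n / p.1 - p.2), (p.1, p.1)))
    ?_ ?_ hback (fun _ _ => rfl) fun q hq => congrArg f (hback q hq).symm
  · rintro ⟨⟨a, b⟩, x, y⟩
    simp only [mem_filter, mem_reps, mem_sigma, Nat.mem_divisors, mem_Ioo]
    rintro ⟨⟨ha, hb, hx, -, he⟩, rfl⟩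
    rw [hdiv hx he, ← he]
    exact ⟨⟨Dvd.intro_left _ (add_mul a b x), by positivity⟩, ha, by omega⟩
  · rintro ⟨e, a⟩
    simp only [mem_filter, mem_reps, mem_sigma, Nat.mem_divisors, mem_Ioo, and_true]
    rintro ⟨⟨he, hn⟩, ha, han⟩
    have he0 : 0 < e := Nat.pos_of_dvd_of_pos he (Nat.pos_of_ne_zero hn)
    refine ⟨ha, by omega, he0, he0, ?_⟩
    rw [← add_mul, Nat.add_sub_cancel' han.le, Nat.div_mul_cancel he]

lemma sum_reps_filter_left_eq (n : ℕ) (f : Quad → ℚ) :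
    ∑ q ∈ reps n with q.1.2 = q.1.1, f q
      = ∑ e ∈ n.divisors, ∑ a ∈ Ioo 0 (n / e), f ((e, e), (n / e - a, a)) := by
  rw [sum_filter_eq_sum_filter_comp reverseQ_involutive (reverseQ_mem_reps (n := n))]
  exact sum_reps_filter_right_eq n (f ∘ reverseQ)

lemma sum_divisors_comm_div {M : Type*} [AddCommMonoid M] (n : ℕ) (F : ℕ → ℕ → M) :
    ∑ e ∈ n.divisors, F e (n / e) = ∑ d ∈ n.divisors, F (n / d) d := by
  rw [← Nat.sum_divisorsAntidiagonal, Nat.sum_divisorsAntidiagonal']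

lemma sum_divisors_cubic (m : ℕ) {f : ℕ → ℚ} (α β γ : ℚ)
    (hf : ∀ d, f d = α * d ^ 3 + β * d ^ 2 + γ * d) :
    ∑ d ∈ m.divisors, f d = α * sig 3 m + β * sig 2 m + γ * sig 1 m := by
  simp only [sig_cast, mul_sum, ← sum_add_distrib, hf, pow_one]

def signedProd (q : Quad) : ℚ := q.1.1 * q.1.2 * (-1) ^ (q.2.1 + q.2.2)

def potential (q : Quad) : ℚ :=
  (q.1.1 : ℚ) ^ 2 * ((-1) ^ q.2.2 + (-1) ^ (q.2.1 + q.2.2)) / 2 - signedProd q / 2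

lemma potential_shear_sub {q : Quad} (hxy : q.2.1 < q.2.2) :
    potential (shear q) + potential (swapQ (shear q)) - potential q - potential (swapQ q)
      = 2 * signedProd q := by
  obtain ⟨⟨a, b⟩, x, y⟩ := q
  dsimp only at hxy
  obtain ⟨c, rfl⟩ := Nat.exists_eq_add_of_lt hxy
  simp only [potential, signedProd, shear, swapQ, show x + c + 1 - x = c + 1 by omega, pow_add]
  push_cast
  rcases Nat.even_or_odd x with hx | hx <;> rcases Nat.even_or_odd c with hc | hc <;>
    simp only [hx.neg_one_pow, hc.neg_one_pow] <;> ring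

lemma signedProd_swapQ (q : Quad) : signedProd (swapQ q) = signedProd q := by
  simp only [signedProd, swapQ, add_comm q.2.2]; ring

lemma signedProd_diag (a b e : ℕ) : signedProd ((a, b), (e, e)) = a * b := by
  simp [signedProd, (Even.add_self e).neg_one_pow]

lemma sum_reps_signedProd_eq_diag (n : ℕ) :
    ∑ q ∈ reps n, signedProd q
      = ∑ q ∈ reps n with q.2.1 = q.2.2, potential q
        - ∑ q ∈ reps n with q.1.2 = q.1.1, potential q
        + ∑ q ∈ reps n with q.2.1 = q.2.2, signedProd q := by
  rw [sum_eq_sum_filter_lt_add_sum_filter_eq swapQ_involutive (swapQ_mem_reps (n := n))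
    (u := fun q => q.2.2) (v := fun q => q.2.1) (fun _ => rfl), ← sum_reps_shear_sub]
  congr 1
  refine sum_congr rfl fun q hq => ?_
  rw [potential_shear_sub (mem_filter.1 hq).2, signedProd_swapQ, two_mul]

lemma sum_reps_filter_right_eq_signedProd (n : ℕ) :
    ∑ q ∈ reps n with q.2.1 = q.2.2, signedProd q = (sig 3 n - sig 1 n) / 6 := by
  simp only [sum_reps_filter_right_eq, signedProd_diag, sum_Ioo_natCast_mul_sub]
  rw [Nat.sum_div_divisors n fun D => ((D : ℚ) ^ 3 - D) / 6,
    sum_divisors_cubic n (1 / 6) 0 (-1 / 6) fun d => by ring]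
  ring

lemma sum_reps_filter_left_eq_potential (n : ℕ) :
    ∑ q ∈ reps n with q.1.2 = q.1.1, potential q
      = -(if 2 ∣ n then (sig 2 (n / 2) : ℚ) else 0) / 2 := by
  have hinner : ∀ e ∈ n.divisors, ∑ a ∈ Ioo 0 (n / e), potential ((e, e), (n / e - a, a))
      = if 2 ∣ n / e then -(e : ℚ) ^ 2 / 2 else 0 := fun e he => by
    have hD : 0 < n / e := Nat.div_pos (Nat.divisor_le he) (Nat.pos_of_mem_divisors he)
    simp only [potential, signedProd]
    rw [sum_congr rfl fun a _ => show _ = (e : ℚ) ^ 2 / 2 * (-1) ^ a by ring, ← mul_sum,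
      sum_Ioo_neg_one_pow hD]
    simp only [even_iff_two_dvd]
    split_ifs <;> ring
  rw [sum_reps_filter_left_eq, sum_congr rfl hinner, sum_divisors_ite_two_dvd_div]
  split_ifs
  · rw [sum_divisors_cubic _ 0 (-1 / 2) 0 fun d => by ring]; ring
  · ring

lemma sum_reps_filter_right_eq_potential (n : ℕ) :
    ∑ q ∈ reps n with q.2.1 = q.2.2, potential q
      = (if 2 ∣ n then (2 * sig 3 (n / 2) - 3 * sig 2 (n / 2) + sig 1 (n / 2) : ℚ) / 6 else 0)
        - (sig 3 n - sig 1 n) / 12 := by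
  set P : ℕ → ℚ := fun D => (2 * D ^ 3 - 3 * D ^ 2 + D) / 12
  set Q : ℕ → ℚ := fun D => (D ^ 3 - 3 * D ^ 2 + 2 * D) / 12
  have hinner : ∀ e D : ℕ, ∑ a ∈ Ioo 0 D, potential ((a, D - a), (e, e))
      = (-1) ^ e * P D + Q D := fun e D => by
    have hpt : ∀ a, potential ((a, D - a), (e, e))
        = ((-1) ^ e + 1) / 2 * (a : ℚ) ^ 2 - (a * ((D - a : ℕ) : ℚ)) / 2 := fun a => by
      simp only [potential, signedProd_diag, (Even.add_self e).neg_one_pow]; ring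
    rw [sum_congr rfl fun a _ => hpt a, sum_sub_distrib, ← mul_sum, ← sum_div,
      sum_Ioo_natCast_sq, sum_Ioo_natCast_mul_sub]
    ring
  rw [sum_reps_filter_right_eq]
  simp only [hinner]
  rw [sum_divisors_comm_div n fun e D => (-1) ^ e * P D + Q D, sum_add_distrib,
    sum_divisors_neg_one_pow_div_mul, sum_divisors_cubic (n / 2) (1 / 6) (-1 / 4) (1 / 12)
    fun d => by ring, sum_divisors_cubic n (1 / 6) (-1 / 4) (1 / 12) fun d => by ring,
    sum_divisors_cubic n (1 / 12) (-1 / 4) (1 / 6) fun d => by ring]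
  split_ifs <;> ring

lemma sum_reps_signedProd (n : ℕ) :
    ∑ q ∈ reps n, signedProd q
      = (sig 3 n - sig 1 n
          + if 2 ∣ n then 4 * (sig 3 (n / 2) : ℚ) + 2 * sig 1 (n / 2) else 0) / 12 := by
  rw [sum_reps_signedProd_eq_diag, sum_reps_filter_right_eq_potential,
    sum_reps_filter_left_eq_potential, sum_reps_filter_right_eq_signedProd]
  split_ifs <;> ring

def altSigma (n : ℕ) : ℚ := ∑ d ∈ n.divisors, (-1) ^ (n / d) * d

lemma altSigma_eq (n : ℕ) :
    altSigma n = 2 * (if 2 ∣ n then (sig 1 (n / 2) : ℚ) else 0) - sig 1 n := by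
  simp only [altSigma, sum_divisors_neg_one_pow_div_mul, sig_cast, pow_one]

lemma sum_antidiagonal_altSigma_mul (n : ℕ) :
    ∑ p ∈ antidiagonal n, altSigma p.1 * altSigma p.2 = ∑ q ∈ reps n, signedProd q := by
  simp only [altSigma, sum_mul_sum, ← sum_product']
  rw [← sum_sigma (antidiagonal n) (fun p => p.1.divisors ×ˢ p.2.divisors)
    fun p => (-1) ^ (p.1.1 / p.2.1) * (p.2.1 : ℚ) * ((-1) ^ (p.1.2 / p.2.2) * p.2.2)]
  refine sum_nbij' (fun p => ((p.2.1, p.2.2), (p.1.1 / p.2.1, p.1.2 / p.2.2)))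
    (fun q => ⟨(q.1.1 * q.2.1, q.1.2 * q.2.2), (q.1.1, q.1.2)⟩) ?_ ?_ ?_ ?_ ?_
  · rintro ⟨⟨i, j⟩, d, e⟩
    simp only [mem_sigma, HasAntidiagonal.mem_antidiagonal, mem_product, Nat.mem_divisors,
      mem_reps]
    rintro ⟨rfl, ⟨⟨x, rfl⟩, hi⟩, ⟨y, rfl⟩, hj⟩
    obtain ⟨hd, hx⟩ := mul_ne_zero_iff.1 hi
    obtain ⟨he, hy⟩ := mul_ne_zero_iff.1 hj
    rw [Nat.mul_div_cancel_left x (Nat.pos_of_ne_zero hd),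
      Nat.mul_div_cancel_left y (Nat.pos_of_ne_zero he)]
    omega
  · rintro ⟨⟨a, b⟩, x, y⟩
    simp only [mem_reps, mem_sigma, HasAntidiagonal.mem_antidiagonal, mem_product,
      Nat.mem_divisors]
    rintro ⟨ha, hb, hx, hy, rfl⟩
    exact ⟨rfl, ⟨Dvd.intro x rfl, by positivity⟩, Dvd.intro y rfl, by positivity⟩
  · rintro ⟨⟨i, j⟩, d, e⟩
    simp only [mem_sigma, HasAntidiagonal.mem_antidiagonal, mem_product, Nat.mem_divisors]
    rintro ⟨-, ⟨hd, -⟩, he, -⟩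
    rw [Nat.mul_div_cancel' hd, Nat.mul_div_cancel' he]
  · rintro ⟨⟨a, b⟩, x, y⟩
    rw [mem_reps]
    rintro ⟨ha, hb, -⟩
    simp only [Nat.mul_div_cancel_left _ ha, Nat.mul_div_cancel_left _ hb]
  · rintro ⟨⟨i, j⟩, d, e⟩ -
    simp only [signedProd, pow_add]
    ring

lemma sig_zero (k : ℕ) : sig k 0 = 0 := by
  simp [sig]

lemma coeff_C_add_C_mul_sq {R : Type*} [CommRing R] (a b : R) (f : PowerSeries R) (n : ℕ) :
    coeff n ((C a + C b * f) ^ 2)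
      = (if n = 0 then a ^ 2 else 0) + 2 * a * b * coeff n f
        + b ^ 2 * ∑ p ∈ antidiagonal n, coeff p.1 f * coeff p.2 f := by
  rw [show (C a + C b * f) ^ 2 = C (a ^ 2) + C (2 * a * b) * f + C (b ^ 2) * (f * f) by
    simp only [map_mul, map_pow, map_ofNat]; ring]
  rw [map_add, map_add, coeff_C, coeff_C_mul, coeff_C_mul, coeff_mul]

lemma E2t_one_sub_two_mul_E2t_two :
    E2t 1 - C 2 * E2t 2 = C (-1) + C 24 * PowerSeries.mk altSigma := by
  ext n
  rw [map_sub, map_add, coeff_C_mul, coeff_C_mul, coeff_C, E2t, E2t, coeff_mk, coeff_mk,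
    coeff_mk, altSigma_eq]
  rcases eq_or_ne n 0 with rfl | hn
  · norm_num [sig_zero]
  · simp only [hn, if_false, one_dvd, Nat.div_one]
    split_ifs <;> ring

lemma coeff_C_mul_E4t_one_add_C_mul_E4t_two (n : ℕ) :
    coeff n (C (1 / 5 : ℚ) * E4t 1 + C (4 / 5) * E4t 2)
      = (if n = 0 then 1 else 0) + 48 * sig 3 n
        + if 2 ∣ n then 192 * (sig 3 (n / 2) : ℚ) else 0 := by
  rw [map_add, coeff_C_mul, coeff_C_mul, E4t, E4t, coeff_mk, coeff_mk]
  rcases eq_or_ne n 0 with rfl | hn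
  · norm_num [sig_zero]
  · simp only [hn, if_false, one_dvd, Nat.div_one]
    split_ifs <;> ring

/-- (E₂(q) − 2E₂(q²))² = (1/5)E₄(q) + (4/5)E₄(q²) as formal q-series. -/
theorem L_two_sq :
    (E2t 1 - PowerSeries.C (R := ℚ) 2 * E2t 2) ^ 2
      = PowerSeries.C (R := ℚ) (1/5) * E4t 1 + PowerSeries.C (R := ℚ) (4/5) * E4t 2 := by
  ext n
  rw [E2t_one_sub_two_mul_E2t_two, coeff_C_add_C_mul_sq, coeff_C_mul_E4t_one_add_C_mul_E4t_two]
  simp only [coeff_mk]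
  rw [sum_antidiagonal_altSigma_mul, sum_reps_signedProd, altSigma_eq]
  rcases eq_or_ne n 0 with rfl | hn
  · norm_num [sig_zero]
  · simp only [hn, if_false]
    split_ifs <;> ring
end
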